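/- Let ψ, g be entire and suppose V_{g,ψ} : F_α^p → F_α^∞ is bounded for some 0 < p ≤ ∞. Then sup_{z∈ℂ} (|g'(z)|/(1+|z|)) e^{(α/2)(|ψ(z)|²-|z|²)} ≤ C ‖V_{g,ψ}‖ for a constant C depending only on α and p; the bound is obtained by testing V_{g,ψ} on the normalized kernels k_{w,α}(z) = e^{α⟨z,w⟩-(α/2)|w|²} with w = ψ(z), which satisfy ‖k_{w,α}‖_{p,α} ≲ 1. -/

import Mathlib

open MeasureTheory Complex Filter Topology ENNReal NNReal

/-- The `F_α^p` norm (finite `p`) as an extended real. -/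
noncomputable def fockNormP (α p : ℝ) (f : ℂ → ℂ) : ℝ≥0∞ :=
  (ENNReal.ofReal (α * p / (2 * Real.pi)) *
    ∫⁻ z : ℂ, ENNReal.ofReal
      (‖f z‖ ^ p * Real.exp (-(α * p / 2) * ‖z‖ ^ 2))) ^ (1 / p)

/-- The `F_α^∞` norm as an extended real. -/
noncomputable def fockNormInf (α : ℝ) (f : ℂ → ℂ) : ℝ≥0∞ :=
  ⨆ z : ℂ, ENNReal.ofReal (‖f z‖ * Real.exp (-(α / 2) * ‖z‖ ^ 2))

/-- The operator `V_{g,ψ} f(z) = ∫_0^z f(ψ(w)) g'(w) dw`. -/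
noncomputable def volterraComp (g ψ f : ℂ → ℂ) (z : ℂ) : ℂ :=
  z * ∫ t in (0:ℝ)..1, f (ψ ((t : ℂ) * z)) * deriv g ((t : ℂ) * z)

/-!
Test `V_{g,ψ}` on the normalized kernel `k = k_{ψ(z),α}`, whose norm is `1` in `F_α^p` and at
most `1` in `F_α^∞`, so that `‖V_{g,ψ} k‖_∞ ≤ ‖V_{g,ψ}‖`. As `(V_{g,ψ} k)' = (k ∘ ψ) g'` and
`|k(ψ z)| = e^{(α/2)|ψ z|²}`, Cauchy's estimate for `V_{g,ψ} k` on the circle of radius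
`(1 + |z|)⁻¹` about `z` gives
`|g'(z)| e^{(α/2)|ψ z|²} ≤ e^{3α/2} (1 + |z|) e^{(α/2)|z|²} ‖V_{g,ψ} k‖_∞`.
-/

section Gaussian

variable {V : Type*} [NormedAddCommGroup V] [InnerProductSpace ℝ V] [FiniteDimensional ℝ V]
  [MeasurableSpace V] [BorelSpace V]

theorem lintegral_ofReal_exp_neg_mul_norm_sub_sq {b : ℝ} (hb : 0 < b) (w : V) :
    ∫⁻ v : V, ENNReal.ofReal (Real.exp (-b * ‖v - w‖ ^ 2)) =
      ENNReal.ofReal ((Real.pi / b) ^ (Module.finrank ℝ V / 2 : ℝ)) := by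
  have hval := GaussianFourier.integral_rexp_neg_mul_sq_norm (V := V) hb
  have hint : Integrable fun v : V => Real.exp (-b * ‖v‖ ^ 2) :=
    Integrable.of_integral_ne_zero (by rw [hval]; positivity)
  rw [lintegral_sub_right_eq_self (fun v => ENNReal.ofReal (Real.exp (-b * ‖v‖ ^ 2))) w,
    ← ofReal_integral_eq_lintegral_ofReal hint (.of_forall fun _ => Real.exp_nonneg _), hval]

end Gaussian

open ComplexConjugate

/-- The normalized reproducing kernel `k_{w,α}(u) = e^{α u w̄ - (α/2)|w|²}` of `F_α^2`. -/
noncomputable def fockKernel (α : ℝ) (w u : ℂ) : ℂ :=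
  Complex.exp (α * (u * conj w) - (α / 2 : ℝ) * (‖w‖ ^ 2 : ℝ))

theorem differentiable_fockKernel (α : ℝ) (w : ℂ) : Differentiable ℂ (fockKernel α w) :=
  (((differentiable_id.mul_const _).const_mul _).sub_const _).cexp

theorem norm_fockKernel_mul_exp (α : ℝ) (w u : ℂ) :
    ‖fockKernel α w u‖ * Real.exp (-(α / 2) * ‖u‖ ^ 2) = Real.exp (-(α / 2) * ‖u - w‖ ^ 2) := by
  rw [fockKernel, Complex.norm_exp, ← Real.exp_add]
  congr 1
  simp only [sub_re, mul_re, ofReal_re, ofReal_im, zero_mul, sub_zero, conj_re, conj_im,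
    Complex.sq_norm, normSq_apply, sub_im]
  ring

theorem norm_fockKernel_self (α : ℝ) (w : ℂ) :
    ‖fockKernel α w w‖ = Real.exp ((α / 2) * ‖w‖ ^ 2) := by
  have h := norm_fockKernel_mul_exp α w w
  rw [sub_self, norm_zero, zero_pow two_ne_zero, mul_zero, Real.exp_zero, neg_mul,
    Real.exp_neg, mul_inv_eq_one₀ (Real.exp_ne_zero _)] at h
  exact h

theorem fockNormP_fockKernel {α p : ℝ} (hα : 0 < α) (hp : 0 < p) (w : ℂ) :
    fockNormP α p (fockKernel α w) = 1 := by
  have hpow : ∀ u : ℂ, ‖fockKernel α w u‖ ^ p * Real.exp (-(α * p / 2) * ‖u‖ ^ 2)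
      = Real.exp (-(α * p / 2) * ‖u - w‖ ^ 2) := fun u => by
    rw [show -(α * p / 2) = -(α / 2) * p by ring, mul_right_comm, Real.exp_mul,
      ← Real.mul_rpow (norm_nonneg _) (Real.exp_nonneg _), norm_fockKernel_mul_exp,
      ← Real.exp_mul]
    ring_nf
  have hgauss := lintegral_ofReal_exp_neg_mul_norm_sub_sq (show 0 < α * p / 2 by positivity) w
  rw [Complex.finrank_real_complex, Nat.cast_ofNat, div_self two_ne_zero, Real.rpow_one]
    at hgauss
  simp_rw [fockNormP, hpow]
  rw [hgauss, ← ENNReal.ofReal_mul (by positivity)]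
  field_simp
  simp

theorem fockNormInf_fockKernel_le_one {α : ℝ} (hα : 0 ≤ α) (w : ℂ) :
    fockNormInf α (fockKernel α w) ≤ 1 :=
  iSup_le fun u => by
    rw [norm_fockKernel_mul_exp, ← ENNReal.ofReal_one]
    exact ENNReal.ofReal_le_ofReal (Real.exp_le_one_iff.2 (by nlinarith [sq_nonneg ‖u - w‖]))

/-- `z ∫₀¹ h(tz) dt` is the integral of `h` along `[0, z]`, hence a primitive of `h`. -/
theorem hasDerivAt_mul_integral_comp_ofReal_mul {h : ℂ → ℂ} (hh : Differentiable ℂ h) (z : ℂ) :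
    HasDerivAt (fun z : ℂ => z * ∫ t in (0:ℝ)..1, h (t * z)) (h z) z := by
  obtain ⟨H, hH⟩ := hh.isExactOn_univ
  have hsegment : ∀ z : ℂ, z * ∫ t in (0:ℝ)..1, h (t * z) = H z - H 0 := fun z => by
    have hderiv : ∀ t ∈ Set.uIcc (0:ℝ) 1,
        HasDerivAt (fun s : ℝ => H (s * z)) (z * h (t * z)) t := fun t _ => by
      have := (hH _ trivial).comp (t : ℂ) ((hasDerivAt_id (t : ℂ)).mul_const z)
      simpa [mul_comm] using this.comp_ofReal
    have hcont : Continuous fun t : ℝ => z * h (t * z) := by have := hh.continuous; fun_prop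
    rw [← intervalIntegral.integral_const_mul,
      intervalIntegral.integral_eq_sub_of_hasDerivAt hderiv (hcont.intervalIntegrable _ _)]
    simp
  simpa only [hsegment] using (hH z trivial).sub_const (H 0)

theorem hasDerivAt_volterraComp {g ψ f : ℂ → ℂ} (hg : Differentiable ℂ g)
    (hψ : Differentiable ℂ ψ) (hf : Differentiable ℂ f) (z : ℂ) :
    HasDerivAt (volterraComp g ψ f) (f (ψ z) * deriv g z) z :=
  hasDerivAt_mul_integral_comp_ofReal_mul ((hf.comp hψ).mul hg.deriv) z

theorem norm_le_mul_exp_of_fockNormInf_ne_top {α : ℝ} {F : ℂ → ℂ} (hF : fockNormInf α F ≠ ⊤)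
    (u : ℂ) : ‖F u‖ ≤ (fockNormInf α F).toReal * Real.exp ((α / 2) * ‖u‖ ^ 2) := by
  have hu : ‖F u‖ * Real.exp (-(α / 2) * ‖u‖ ^ 2) ≤ (fockNormInf α F).toReal :=
    (ENNReal.ofReal_le_iff_le_toReal hF).1
      (le_iSup (fun u => ENNReal.ofReal (‖F u‖ * Real.exp (-(α / 2) * ‖u‖ ^ 2))) u)
  rwa [neg_mul, Real.exp_neg, ← div_eq_mul_inv, div_le_iff₀ (Real.exp_pos _)] at hu

/-- On the circle of radius `(1 + |z|)⁻¹` about `z` one has `|u|² ≤ |z|² + 3`, whence the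
constant `e^{3α/2}`. -/
theorem norm_deriv_div_mul_exp_le {α M : ℝ} (hα : 0 ≤ α) {F : ℂ → ℂ} (hF : Differentiable ℂ F)
    (hM : ∀ u, ‖F u‖ ≤ M * Real.exp ((α / 2) * ‖u‖ ^ 2)) (z : ℂ) :
    ‖deriv F z‖ / (1 + ‖z‖) * Real.exp (-(α / 2) * ‖z‖ ^ 2) ≤ Real.exp (3 * (α / 2)) * M := by
  have hz : 0 < 1 + ‖z‖ := by positivity
  have hM0 : 0 ≤ M := nonneg_of_mul_nonneg_left ((norm_nonneg _).trans (hM 0)) (Real.exp_pos _)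
  have hR : 0 < (1 + ‖z‖)⁻¹ := inv_pos.2 hz
  have hRz : (1 + ‖z‖)⁻¹ * (1 + ‖z‖) = 1 := inv_mul_cancel₀ hz.ne'
  have hsphere : ∀ u ∈ Metric.sphere z (1 + ‖z‖)⁻¹,
      ‖F u‖ ≤ M * Real.exp ((α / 2) * ‖z‖ ^ 2) * Real.exp (3 * (α / 2)) := fun u hu => by
    have hu : ‖u‖ ≤ ‖z‖ + (1 + ‖z‖)⁻¹ := by
      rw [mem_sphere_iff_norm] at hu
      linarith [norm_le_norm_add_norm_sub' u z]
    have hu2 : ‖u‖ ^ 2 ≤ ‖z‖ ^ 2 + 3 := by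
      nlinarith [norm_nonneg u, norm_nonneg z, mul_nonneg hR.le (norm_nonneg z)]
    calc ‖F u‖ ≤ M * Real.exp ((α / 2) * ‖u‖ ^ 2) := hM u
      _ ≤ M * Real.exp ((α / 2) * ‖z‖ ^ 2 + 3 * (α / 2)) := by gcongr; nlinarith
      _ = _ := by rw [Real.exp_add, mul_assoc]
  have hcauchy := Complex.norm_deriv_le_of_forall_mem_sphere_norm_le hR hF.diffContOnCl hsphere
  rw [div_inv_eq_mul] at hcauchy
  rw [div_mul_eq_mul_div, div_le_iff₀ hz, neg_mul, Real.exp_neg, ← div_eq_mul_inv,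
    div_le_iff₀ (Real.exp_pos _)]
  linarith

theorem ofReal_norm_deriv_div_mul_exp_le_fockNormInf {α : ℝ} (hα : 0 ≤ α) {F : ℂ → ℂ}
    (hF : Differentiable ℂ F) (z : ℂ) :
    ENNReal.ofReal (‖deriv F z‖ / (1 + ‖z‖) * Real.exp (-(α / 2) * ‖z‖ ^ 2)) ≤
      ENNReal.ofReal (Real.exp (3 * (α / 2))) * fockNormInf α F := by
  rcases eq_or_ne (fockNormInf α F) ⊤ with htop | htop
  · rw [htop, ENNReal.mul_top (ENNReal.ofReal_pos.2 (Real.exp_pos _)).ne']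
    exact le_top
  · calc _ ≤ ENNReal.ofReal (Real.exp (3 * (α / 2)) * (fockNormInf α F).toReal) :=
          ENNReal.ofReal_le_ofReal <|
            norm_deriv_div_mul_exp_le hα hF (norm_le_mul_exp_of_fockNormInf_ne_top htop) z
      _ = _ := by rw [ENNReal.ofReal_mul (Real.exp_nonneg _), ENNReal.ofReal_toReal htop]

theorem ofReal_norm_deriv_div_mul_exp_le_fockNormInf_volterraComp {α : ℝ} (hα : 0 ≤ α)
    {ψ g : ℂ → ℂ} (hψ : Differentiable ℂ ψ) (hg : Differentiable ℂ g) (z : ℂ) :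
    ENNReal.ofReal (‖deriv g z‖ / (1 + ‖z‖) * Real.exp ((α / 2) * (‖ψ z‖ ^ 2 - ‖z‖ ^ 2))) ≤
      ENNReal.ofReal (Real.exp (3 * (α / 2))) *
        fockNormInf α (volterraComp g ψ (fockKernel α (ψ z))) := by
  have hk := differentiable_fockKernel α (ψ z)
  have hV := fun u => (hasDerivAt_volterraComp hg hψ hk u).differentiableAt
  convert ofReal_norm_deriv_div_mul_exp_le_fockNormInf hα hV z using 2
  rw [(hasDerivAt_volterraComp hg hψ hk z).deriv, norm_mul, norm_fockKernel_self,
    mul_sub, Real.exp_sub, neg_mul, Real.exp_neg]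
  ring

theorem volterraComp_sup_le_of_bounded (α p : ℝ) (hα : 0 < α) (hp : 0 < p)
    (ψ g : ℂ → ℂ) (hψ : Differentiable ℂ ψ) (hg : Differentiable ℂ g) :
    ∃ C : ℝ, 0 < C ∧
      (∀ B : ℝ≥0∞,
        (∀ f : ℂ → ℂ, Differentiable ℂ f →
          fockNormInf α (volterraComp g ψ f) ≤ B * fockNormP α p f) →
        ∀ z : ℂ, ENNReal.ofReal (‖deriv g z‖ / (1 + ‖z‖) *
            Real.exp ((α / 2) * (‖ψ z‖ ^ 2 - ‖z‖ ^ 2)))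
          ≤ ENNReal.ofReal C * B) ∧
      (∀ B : ℝ≥0∞,
        (∀ f : ℂ → ℂ, Differentiable ℂ f →
          fockNormInf α (volterraComp g ψ f) ≤ B * fockNormInf α f) →
        ∀ z : ℂ, ENNReal.ofReal (‖deriv g z‖ / (1 + ‖z‖) *
            Real.exp ((α / 2) * (‖ψ z‖ ^ 2 - ‖z‖ ^ 2)))
          ≤ ENNReal.ofReal C * B) := by
  refine ⟨Real.exp (3 * (α / 2)), Real.exp_pos _, fun B hB z => ?_, fun B hB z => ?_⟩
  all_goals
    refine (ofReal_norm_deriv_div_mul_exp_le_fockNormInf_volterraComp hα.le hψ hg z).trans ?_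
    gcongr
    refine (hB _ (differentiable_fockKernel α (ψ z))).trans ?_
  · rw [fockNormP_fockKernel hα hp, mul_one]
  · simpa using mul_le_mul_right (fockNormInf_fockKernel_le_one hα.le (ψ z)) B
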